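/- Let K, L be star bodies in ℝⁿ, 0 ≤ i < n, and φ : (0,∞) → (0,∞) convex and strictly decreasing. Define the Orlicz dual mixed quermassintegral W̃_{φ,i}(K,L) = (1/n)∫_{S^{n-1}} φ(ρ(L,u)/ρ(K,u)) ρ(K,u)^{n-i} dS(u) and the dual quermassintegral W̃ᵢ(K) = (1/n)∫_{S^{n-1}} ρ(K,u)^{n-i} dS(u). Then W̃_{φ,i}(K,L) ≥ W̃ᵢ(K) · φ( (W̃ᵢ(L)/W̃ᵢ(K))^{1/(n-i)} ). If φ is strictly convex, equality holds if and only if K and L are dilates. -/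

import Mathlib

/-!
Weighting the sphere by `ρK^(n-i)` makes `W̃_{φ,i}(K,L) / W̃ᵢ(K)` the average of `φ (ρL / ρK)`
and `W̃ᵢ(K,L) / W̃ᵢ(K)` the average of `ρL / ρK`. Jensen's inequality for `φ` bounds the former
below by `φ` of the latter; Jensen's inequality for `t ↦ t^(n-i)` is the dual Minkowski inequality
`(W̃ᵢ(K,L) / W̃ᵢ(K))^(n-i) ≤ W̃ᵢ(L) / W̃ᵢ(K)`, and `φ` is decreasing. In the equality case the
strict Jensen inequality forces `ρL / ρK` to be a.e. constant, hence constant, because the spherical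
Hausdorff measure charges every nonempty open set.

That this measure is finite and positive on open sets follows from rotation invariance and
compactness, once one ball is compared with Lebesgue measure on `ℝⁿ⁻¹`: from above through the
inverse gnomonic projection, a `C¹` chart, and from below through the `1`-Lipschitz projection
forgetting the first coordinate.
-/

open MeasureTheory Metric Real Set

/-- The surface (spherical) measure on the unit sphere `S^{n-1} ⊆ ℝⁿ`. -/
noncomputable def sphereσ (n : ℕ) : Measure (sphere (0 : EuclideanSpace ℝ (Fin n)) 1) :=
  μH[(n : ℝ) - 1]

open scoped ENNReal

section SphereHomogeneity

variable {E : Type*} [NormedAddCommGroup E] [InnerProductSpace ℝ E] {r : ℝ}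

lemma exists_isometryEquiv_sphere_apply_eq (u v : sphere (0 : E) r) :
    ∃ e : sphere (0 : E) r ≃ᵢ sphere (0 : E) r, e u = v := by
  let R := Submodule.reflection (ℝ ∙ ((u : E) - v))ᗮ
  have hR : R u = v := Submodule.reflection_sub (by simp [norm_eq_of_mem_sphere])
  refine ⟨⟨R.toEquiv.subtypeEquiv fun x => by simp, fun x y => ?_⟩, Subtype.ext hR⟩
  simp [Subtype.edist_eq]

lemma hausdorffMeasure_ball_sphere_eq [MeasurableSpace E] [BorelSpace E] (d s : ℝ)
    (u v : sphere (0 : E) r) : μH[d] (ball u s) = μH[d] (ball v s) := by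
  obtain ⟨e, rfl⟩ := exists_isometryEquiv_sphere_apply_eq u v
  rw [← e.image_ball, e.hausdorffMeasure_image]

end SphereHomogeneity

lemma exists_measure_univ_le_mul_ball {X : Type*} [PseudoMetricSpace X] [CompactSpace X]
    [MeasurableSpace X] (μ : Measure X) {r : ℝ} (hr : 0 < r)
    (h : ∀ x y : X, μ (ball x r) = μ (ball y r)) (x : X) :
    ∃ N : ℕ, μ univ ≤ N * μ (ball x r) := by
  obtain ⟨t, ht⟩ := isCompact_univ.elim_finite_subcover (fun y => ball y r)
    (fun _ => isOpen_ball) fun (y : X) _ => mem_iUnion.2 ⟨y, mem_ball_self hr⟩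
  refine ⟨t.card, ?_⟩
  calc μ univ ≤ ∑ y ∈ t, μ (ball y r) := (measure_mono ht).trans (measure_biUnion_finset_le t _)
    _ = t.card * μ (ball x r) := by simp [h _ x]

lemma hausdorffMeasure_pi_fin_eq_volume (m : ℕ) : (μH[m] : Measure (Fin m → ℝ)) = volume := by
  simpa using hausdorffMeasure_pi_real (ι := Fin m)

namespace EuclideanSpace

variable (m : ℕ)

noncomputable def northPole : sphere (0 : EuclideanSpace ℝ (Fin (m + 1))) 1 :=
  ⟨EuclideanSpace.single 0 1, by simp⟩

noncomputable def tangentPoint (y : Fin m → ℝ) : EuclideanSpace ℝ (Fin (m + 1)) :=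
  WithLp.toLp 2 (Fin.cons 1 y : Fin (m + 1) → ℝ)

noncomputable def gnomonicInv (y : Fin m → ℝ) : EuclideanSpace ℝ (Fin (m + 1)) :=
  ‖tangentPoint m y‖⁻¹ • tangentPoint m y

def sphereTail (x : sphere (0 : EuclideanSpace ℝ (Fin (m + 1))) 1) : Fin m → ℝ :=
  Fin.tail (x : EuclideanSpace ℝ (Fin (m + 1))).ofLp

variable {m}

lemma tangentPoint_ne_zero (y : Fin m → ℝ) : tangentPoint m y ≠ 0 := fun h => by
  simpa [tangentPoint] using congrArg (fun x : EuclideanSpace ℝ (Fin (m + 1)) => x 0) h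

lemma contDiff_gnomonicInv : ContDiff ℝ 1 (gnomonicInv m) := by
  have h : ContDiff ℝ 1 (tangentPoint m) := by
    refine (contDiff_piLp 2).2 fun i => ?_
    refine Fin.cases ?_ (fun j => ?_) i
    · simpa [tangentPoint] using contDiff_const
    · simpa [tangentPoint] using contDiff_apply ℝ ℝ j
  have h_norm := h.norm ℝ tangentPoint_ne_zero
  exact (h_norm.inv fun y => norm_ne_zero_iff.2 (tangentPoint_ne_zero y)).smul h

lemma coe_ball_northPole_subset_image_gnomonicInv :
    Subtype.val '' ball (northPole m) (1 / 2) ⊆ gnomonicInv m '' closedBall 0 2 := by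
  rintro _ ⟨⟨x, hx1⟩, hx, rfl⟩
  rw [mem_ball, Subtype.dist_eq, dist_eq_norm] at hx
  rw [mem_sphere_zero_iff_norm] at hx1
  have hx0 : 1 / 2 < x 0 := by
    have := (PiLp.norm_apply_le (x - (northPole m : EuclideanSpace ℝ (Fin (m + 1)))) 0).trans_lt hx
    simp only [northPole, PiLp.sub_apply, PiLp.single_apply, if_true, Real.norm_eq_abs,
      abs_lt] at this
    linarith
  have hx0' : 0 < x 0 := by linarith
  have htan : tangentPoint m (fun j => x j.succ / x 0) = (x 0)⁻¹ • x := by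
    ext i
    refine Fin.cases ?_ (fun j => ?_) i
    · simp [tangentPoint, hx0'.ne']
    · simp [tangentPoint, div_eq_inv_mul]
  refine ⟨fun j => x j.succ / x 0, ?_, ?_⟩
  · refine mem_closedBall_zero_iff.2 ((pi_norm_le_iff_of_nonneg zero_le_two).2 fun j => ?_)
    rw [norm_div, Real.norm_of_nonneg hx0'.le, div_le_iff₀ hx0']
    have := (PiLp.norm_apply_le x j.succ).trans_eq hx1
    linarith
  · rw [gnomonicInv, htan, norm_smul, hx1, mul_one, norm_inv, Real.norm_of_nonneg hx0'.le, inv_inv,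
      smul_smul, mul_inv_cancel₀ hx0'.ne', one_smul]

lemma hausdorffMeasure_ball_northPole_lt_top : μH[m] (ball (northPole m) (1 / 2)) < ∞ := by
  obtain ⟨K, hK⟩ := (contDiff_gnomonicInv (m := m)).locallyLipschitz.locallyLipschitzOn
    |>.exists_lipschitzOnWith_of_compact (isCompact_closedBall (0 : Fin m → ℝ) 2)
  have hvol : μH[m] (closedBall (0 : Fin m → ℝ) 2) < ∞ := by
    rw [hausdorffMeasure_pi_fin_eq_volume, Real.volume_pi_closedBall _ zero_le_two]
    exact ENNReal.ofReal_lt_top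
  calc μH[m] (ball (northPole m) (1 / 2))
      = μH[m] (Subtype.val '' ball (northPole m) (1 / 2)) :=
        (isometry_subtype_coe.hausdorffMeasure_image (Or.inl m.cast_nonneg) _).symm
    _ ≤ μH[m] (gnomonicInv m '' closedBall 0 2) :=
        measure_mono coe_ball_northPole_subset_image_gnomonicInv
    _ ≤ K ^ (m : ℝ) * μH[m] (closedBall (0 : Fin m → ℝ) 2) :=
        hK.hausdorffMeasure_image_le m.cast_nonneg
    _ < ∞ := ENNReal.mul_lt_top (by simp) hvol

lemma lipschitzWith_sphereTail : LipschitzWith 1 (sphereTail m) :=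
  LipschitzWith.mk_one fun _ _ => (dist_pi_le_iff dist_nonneg).2 fun _ => PiLp.dist_apply_le _ _ _

lemma ball_subset_range_sphereTail : ball (0 : Fin m → ℝ) (m + 1)⁻¹ ⊆ range (sphereTail m) := by
  intro y hy
  rw [mem_ball_zero_iff] at hy
  have hm : (0 : ℝ) < m + 1 := by positivity
  have hs : ∑ j, y j ^ 2 ≤ 1 := calc
    ∑ j, y j ^ 2 ≤ ∑ _j : Fin m, (m + 1 : ℝ)⁻¹ := Finset.sum_le_sum fun j _ => by
        have h1 := (norm_le_pi_norm y j).trans_lt hy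
        rw [Real.norm_eq_abs] at h1
        have h2 : (m + 1 : ℝ)⁻¹ ≤ 1 := inv_le_one_of_one_le₀ (by linarith)
        nlinarith [abs_nonneg (y j), sq_abs (y j)]
    _ ≤ 1 := by
        rw [Finset.sum_const, Finset.card_univ, Fintype.card_fin, nsmul_eq_mul, ← div_eq_mul_inv,
          div_le_one hm]
        linarith
  refine ⟨⟨WithLp.toLp 2 (Fin.cons √(1 - ∑ j, y j ^ 2) y : Fin (m + 1) → ℝ), ?_⟩, rfl⟩
  rw [mem_sphere_zero_iff_norm, EuclideanSpace.norm_eq, Fin.sum_univ_succ]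
  simp [Real.sq_sqrt (sub_nonneg.2 hs)]

lemma hausdorffMeasure_univ_sphere_pos :
    0 < μH[m] (univ : Set (sphere (0 : EuclideanSpace ℝ (Fin (m + 1))) 1)) := by
  calc (0 : ℝ≥0∞) < μH[m] (ball (0 : Fin m → ℝ) (m + 1)⁻¹) := by
        rw [hausdorffMeasure_pi_fin_eq_volume, Real.volume_pi_ball _ (by positivity)]
        exact ENNReal.ofReal_pos.2 (by positivity)
    _ ≤ μH[m] (sphereTail m '' univ) := measure_mono (image_univ ▸ ball_subset_range_sphereTail)
    _ ≤ μH[m] univ := by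
        simpa using lipschitzWith_sphereTail.hausdorffMeasure_image_le m.cast_nonneg univ

end EuclideanSpace

lemma sphereσ_succ (m : ℕ) : sphereσ (m + 1) = μH[m] := by simp [sphereσ]

instance (m : ℕ) : Nonempty (sphere (0 : EuclideanSpace ℝ (Fin (m + 1))) 1) :=
  ⟨EuclideanSpace.northPole m⟩

instance (m : ℕ) : IsFiniteMeasure (sphereσ (m + 1)) := by
  obtain ⟨N, hN⟩ := exists_measure_univ_le_mul_ball μH[m] one_half_pos
    (hausdorffMeasure_ball_sphere_eq _ _) (EuclideanSpace.northPole m)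
  refine ⟨?_⟩
  rw [sphereσ_succ]
  exact hN.trans_lt (ENNReal.mul_lt_top (ENNReal.natCast_lt_top N)
    EuclideanSpace.hausdorffMeasure_ball_northPole_lt_top)

instance (m : ℕ) : Measure.IsOpenPosMeasure (sphereσ (m + 1)) := by
  refine ⟨fun U hU ⟨x, hx⟩ hU0 => ?_⟩
  obtain ⟨r, hr, hrU⟩ := Metric.isOpen_iff.1 hU x hx
  obtain ⟨N, hN⟩ := exists_measure_univ_le_mul_ball μH[m] hr (hausdorffMeasure_ball_sphere_eq _ _) x
  rw [sphereσ_succ] at hU0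
  rw [measure_mono_null hrU hU0, mul_zero] at hN
  exact EuclideanSpace.hausdorffMeasure_univ_sphere_pos.ne' (le_antisymm hN bot_le)

section CompactJensen

variable {X : Type*} [TopologicalSpace X] {s : Set ℝ} {ψ : ℝ → ℝ} {w g : X → ℝ}

lemma isOpenPosMeasure_withDensity_ofReal [MeasurableSpace X] [OpensMeasurableSpace X]
    {μ : Measure X} [μ.IsOpenPosMeasure] (hw : Continuous w)
    (hw0 : ∀ x, 0 < w x) : (μ.withDensity fun x => ENNReal.ofReal (w x)).IsOpenPosMeasure := by
  refine ⟨fun U hU hne => ?_⟩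
  rw [Ne, withDensity_apply_eq_zero' hw.measurable.ennreal_ofReal.aemeasurable]
  simpa [hw0] using hU.measure_ne_zero μ hne

variable [CompactSpace X]

lemma exists_Icc_subset_forall_mem_Icc [Nonempty X] (hs : Convex ℝ s) (hg : Continuous g)
    (hgs : ∀ x, g x ∈ s) : ∃ a b, Icc a b ⊆ s ∧ ∀ x, g x ∈ Icc a b := by
  obtain ⟨x₀, -, hx₀⟩ := isCompact_univ.exists_isMinOn univ_nonempty hg.continuousOn
  obtain ⟨x₁, -, hx₁⟩ := isCompact_univ.exists_isMaxOn univ_nonempty hg.continuousOn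
  exact ⟨g x₀, g x₁, hs.ordConnected.out (hgs x₀) (hgs x₁),
    fun x => ⟨hx₀ (mem_univ x), hx₁ (mem_univ x)⟩⟩

variable [MeasurableSpace X] [OpensMeasurableSpace X] {μ : Measure X} [IsFiniteMeasure μ]

lemma Continuous.integrable_of_compactSpace {f : X → ℝ} (hf : Continuous f) : Integrable f μ :=
  hf.integrable_of_hasCompactSupport (.of_compactSpace f)

lemma integral_pos_of_continuous [NeZero μ] {f : X → ℝ} (hf : Continuous f)
    (hpos : ∀ x, 0 < f x) : 0 < ∫ x, f x ∂μ := by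
  rw [integral_pos_iff_support_of_nonneg (fun x => (hpos x).le) hf.integrable_of_compactSpace,
    Function.support_eq_univ fun x => (hpos x).ne']
  exact Measure.measure_univ_pos.2 (NeZero.ne μ)

theorem ConvexOn.map_average_le_of_continuous [NeZero μ] (hψ : ConvexOn ℝ s ψ) (hs : IsOpen s)
    (hg : Continuous g) (hgs : ∀ x, g x ∈ s) : ψ (⨍ x, g x ∂μ) ≤ ⨍ x, ψ (g x) ∂μ := by
  have := Measure.nonempty_of_neZero μ
  obtain ⟨a, b, hab, hgab⟩ := exists_Icc_subset_forall_mem_Icc hψ.1 hg hgs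
  have hψc : ContinuousOn ψ (Icc a b) := (hψ.continuousOn hs).mono hab
  exact (hψ.subset hab (convex_Icc a b)).map_average_le hψc isClosed_Icc (.of_forall hgab)
    hg.integrable_of_compactSpace (hψc.comp_continuous hg hgab).integrable_of_compactSpace

theorem StrictConvexOn.eq_average_of_map_average_eq [μ.IsOpenPosMeasure]
    (hψ : StrictConvexOn ℝ s ψ) (hs : IsOpen s) (hg : Continuous g) (hgs : ∀ x, g x ∈ s)
    (heq : ψ (⨍ x, g x ∂μ) = ⨍ x, ψ (g x) ∂μ) (x : X) : g x = ⨍ y, g y ∂μ := by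
  have : Nonempty X := ⟨x⟩
  obtain ⟨a, b, hab, hgab⟩ := exists_Icc_subset_forall_mem_Icc hψ.1 hg hgs
  have hψc : ContinuousOn ψ (Icc a b) := (hψ.convexOn.continuousOn hs).mono hab
  rcases (hψ.subset hab (convex_Icc a b)).ae_eq_const_or_map_average_lt (μ := μ) hψc isClosed_Icc
    (.of_forall hgab) hg.integrable_of_compactSpace
    (hψc.comp_continuous hg hgab).integrable_of_compactSpace with hconst | hlt
  · exact congrFun ((hg.ae_eq_iff_eq μ continuous_const).1 hconst) x
  · exact absurd heq hlt.ne

lemma measureReal_univ_withDensity_ofReal (hw : Continuous w) (hw0 : ∀ x, 0 ≤ w x) :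
    (μ.withDensity fun x => ENNReal.ofReal (w x)).real univ = ∫ x, w x ∂μ := by
  rw [measureReal_def, withDensity_apply _ MeasurableSet.univ, Measure.restrict_univ,
    ← ofReal_integral_eq_lintegral_ofReal hw.integrable_of_compactSpace (.of_forall hw0),
    ENNReal.toReal_ofReal (integral_nonneg hw0)]

lemma average_withDensity_ofReal (hw : Continuous w) (hw0 : ∀ x, 0 ≤ w x) (h : X → ℝ) :
    ⨍ x, h x ∂μ.withDensity (fun x => ENNReal.ofReal (w x)) =
      (∫ x, h x * w x ∂μ) / ∫ x, w x ∂μ := by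
  rw [average_eq, measureReal_univ_withDensity_ofReal hw hw0,
    integral_withDensity_eq_integral_toReal_smul hw.measurable.ennreal_ofReal
      (.of_forall fun _ => ENNReal.ofReal_lt_top)]
  simp [ENNReal.toReal_ofReal (hw0 _), mul_comm, div_eq_inv_mul]

theorem StrictConvexOn.eq_weighted_average_of_map_eq [μ.IsOpenPosMeasure]
    (hψ : StrictConvexOn ℝ s ψ) (hs : IsOpen s) (hw : Continuous w) (hw0 : ∀ x, 0 < w x)
    (hg : Continuous g) (hgs : ∀ x, g x ∈ s)
    (heq : ψ ((∫ x, g x * w x ∂μ) / ∫ x, w x ∂μ) = (∫ x, ψ (g x) * w x ∂μ) / ∫ x, w x ∂μ) (x : X) :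
    g x = (∫ x, g x * w x ∂μ) / ∫ x, w x ∂μ := by
  have hw0' x := (hw0 x).le
  have : IsFiniteMeasure (μ.withDensity fun x => ENNReal.ofReal (w x)) :=
    isFiniteMeasure_withDensity_ofReal hw.integrable_of_compactSpace.2
  have := isOpenPosMeasure_withDensity_ofReal (μ := μ) hw hw0
  simp only [← average_withDensity_ofReal (μ := μ) hw hw0'] at heq ⊢
  exact hψ.eq_average_of_map_average_eq hs hg hgs heq x

variable [NeZero μ]

theorem ConvexOn.map_weighted_average_le (hψ : ConvexOn ℝ s ψ) (hs : IsOpen s) (hw : Continuous w)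
    (hw0 : ∀ x, 0 < w x) (hg : Continuous g) (hgs : ∀ x, g x ∈ s) :
    ψ ((∫ x, g x * w x ∂μ) / ∫ x, w x ∂μ) ≤ (∫ x, ψ (g x) * w x ∂μ) / ∫ x, w x ∂μ := by
  have hw0' x := (hw0 x).le
  have : IsFiniteMeasure (μ.withDensity fun x => ENNReal.ofReal (w x)) :=
    isFiniteMeasure_withDensity_ofReal hw.integrable_of_compactSpace.2
  have : NeZero (μ.withDensity fun x => ENNReal.ofReal (w x)) := ⟨fun h0 => by
    simpa [h0, (integral_pos_of_continuous (μ := μ) hw hw0).ne] using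
      measureReal_univ_withDensity_ofReal (μ := μ) hw hw0'⟩
  simpa only [average_withDensity_ofReal (μ := μ) hw hw0'] using
    hψ.map_average_le_of_continuous (μ := μ.withDensity fun x => ENNReal.ofReal (w x)) hs hg hgs

end CompactJensen

section DualQuermassintegral

variable {X : Type*} [MeasurableSpace X]

/- With `μ = sphereσ n` and `p = n - i`, the following are `n` times the dual quermassintegral
`W̃ᵢ(K)`, the dual mixed quermassintegral `W̃ᵢ(K, L)` and the Orlicz dual mixed quermassintegral
`W̃_{φ,i}(K, L)` of star bodies with radial functions `ρK`, `ρL`. -/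

noncomputable def dualQuermassintegral (μ : Measure X) (p : ℕ) (ρ : X → ℝ) : ℝ :=
  ∫ x, ρ x ^ p ∂μ

noncomputable def dualMixedQuermassintegral (μ : Measure X) (p : ℕ) (ρK ρL : X → ℝ) : ℝ :=
  ∫ x, ρK x ^ (p - 1) * ρL x ∂μ

noncomputable def orliczDualMixedQuermassintegral (μ : Measure X) (p : ℕ) (φ : ℝ → ℝ)
    (ρK ρL : X → ℝ) : ℝ :=
  ∫ x, φ (ρL x / ρK x) * ρK x ^ p ∂μ

variable {μ : Measure X} {p : ℕ} {φ : ℝ → ℝ} {ρK ρL : X → ℝ}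

lemma integral_div_mul_pow_eq_dualMixedQuermassintegral (hp : p ≠ 0) (hKpos : ∀ x, 0 < ρK x) :
    ∫ x, ρL x / ρK x * ρK x ^ p ∂μ = dualMixedQuermassintegral μ p ρK ρL := by
  obtain ⟨q, rfl⟩ := Nat.exists_eq_succ_of_ne_zero hp
  refine integral_congr_ae (.of_forall fun x => ?_)
  simp only [Nat.succ_sub_one, pow_succ]
  field_simp [(hKpos x).ne']

lemma integral_div_pow_mul_pow_eq_dualQuermassintegral (hKpos : ∀ x, 0 < ρK x) :
    ∫ x, (ρL x / ρK x) ^ p * ρK x ^ p ∂μ = dualQuermassintegral μ p ρL := by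
  refine integral_congr_ae (.of_forall fun x => ?_)
  simp only [div_pow, div_mul_cancel₀ _ (pow_ne_zero p (hKpos x).ne')]

variable [TopologicalSpace X] [CompactSpace X] [OpensMeasurableSpace X] [IsFiniteMeasure μ]

lemma dualQuermassintegral_pos [NeZero μ] (hK : Continuous ρK) (hKpos : ∀ x, 0 < ρK x) :
    0 < dualQuermassintegral μ p ρK :=
  integral_pos_of_continuous (hK.pow p) fun x => pow_pos (hKpos x) p

lemma dualMixedQuermassintegral_pos [NeZero μ] (hK : Continuous ρK) (hL : Continuous ρL)
    (hKpos : ∀ x, 0 < ρK x) (hLpos : ∀ x, 0 < ρL x) :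
    0 < dualMixedQuermassintegral μ p ρK ρL :=
  integral_pos_of_continuous ((hK.pow _).mul hL) fun x => mul_pos (pow_pos (hKpos x) _) (hLpos x)

/-- The dual Minkowski inequality `W̃ᵢ(K, L)ⁿ⁻ⁱ ≤ W̃ᵢ(K)ⁿ⁻ⁱ⁻¹ W̃ᵢ(L)`, divided by `W̃ᵢ(K)ⁿ⁻ⁱ`. -/
theorem dualMixedQuermassintegral_div_pow_le [NeZero μ] (hp : p ≠ 0) (hK : Continuous ρK)
    (hL : Continuous ρL) (hKpos : ∀ x, 0 < ρK x) (hLpos : ∀ x, 0 < ρL x) :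
    (dualMixedQuermassintegral μ p ρK ρL / dualQuermassintegral μ p ρK) ^ p ≤
      dualQuermassintegral μ p ρL / dualQuermassintegral μ p ρK := by
  have h := ((convexOn_pow p).subset Ioi_subset_Ici_self (convex_Ioi 0)).map_weighted_average_le
    (μ := μ) (w := fun x => ρK x ^ p) (g := fun x => ρL x / ρK x) isOpen_Ioi (hK.pow p)
    (fun x => pow_pos (hKpos x) p) (hL.div hK fun x => (hKpos x).ne')
    (fun x => div_pos (hLpos x) (hKpos x))
  rwa [integral_div_mul_pow_eq_dualMixedQuermassintegral hp hKpos,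
    integral_div_pow_mul_pow_eq_dualQuermassintegral hKpos] at h

theorem dualQuermassintegral_mul_map_le_orliczDualMixedQuermassintegral [NeZero μ] (hp : p ≠ 0)
    (hφ : ConvexOn ℝ (Ioi 0) φ) (hK : Continuous ρK) (hL : Continuous ρL)
    (hKpos : ∀ x, 0 < ρK x) (hLpos : ∀ x, 0 < ρL x) :
    dualQuermassintegral μ p ρK *
        φ (dualMixedQuermassintegral μ p ρK ρL / dualQuermassintegral μ p ρK) ≤
      orliczDualMixedQuermassintegral μ p φ ρK ρL := by
  have h := hφ.map_weighted_average_le (μ := μ) (w := fun x => ρK x ^ p)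
    (g := fun x => ρL x / ρK x) isOpen_Ioi (hK.pow p) (fun x => pow_pos (hKpos x) p)
    (hL.div hK fun x => (hKpos x).ne') (fun x => div_pos (hLpos x) (hKpos x))
  rw [integral_div_mul_pow_eq_dualMixedQuermassintegral hp hKpos] at h
  exact (le_div_iff₀' (dualQuermassintegral_pos hK hKpos)).1 h

theorem eq_mul_of_dualQuermassintegral_mul_map_eq [μ.IsOpenPosMeasure] (hp : p ≠ 0)
    (hφ : StrictConvexOn ℝ (Ioi 0) φ) (hK : Continuous ρK) (hL : Continuous ρL)
    (hKpos : ∀ x, 0 < ρK x) (hLpos : ∀ x, 0 < ρL x)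
    (heq : dualQuermassintegral μ p ρK *
        φ (dualMixedQuermassintegral μ p ρK ρL / dualQuermassintegral μ p ρK) =
      orliczDualMixedQuermassintegral μ p φ ρK ρL) (x : X) :
    ρL x = dualMixedQuermassintegral μ p ρK ρL / dualQuermassintegral μ p ρK * ρK x := by
  have : Nonempty X := ⟨x⟩
  have h := hφ.eq_weighted_average_of_map_eq (μ := μ) (w := fun x => ρK x ^ p)
    (g := fun x => ρL x / ρK x) isOpen_Ioi (hK.pow p) (fun x => pow_pos (hKpos x) p)
    (hL.div hK fun x => (hKpos x).ne') (fun x => div_pos (hLpos x) (hKpos x))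
  rw [integral_div_mul_pow_eq_dualMixedQuermassintegral hp hKpos] at h
  rw [← div_eq_iff (hKpos x).ne']
  exact h ((eq_div_iff (dualQuermassintegral_pos hK hKpos).ne').2 ((mul_comm _ _).trans heq)) x

variable [NeZero μ]

lemma map_rpow_le_map_dualMixedQuermassintegral_div (hp : p ≠ 0) (hφ : AntitoneOn φ (Ioi 0))
    (hK : Continuous ρK) (hL : Continuous ρL) (hKpos : ∀ x, 0 < ρK x) (hLpos : ∀ x, 0 < ρL x) :
    φ ((dualQuermassintegral μ p ρL / dualQuermassintegral μ p ρK) ^ (p⁻¹ : ℝ)) ≤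
      φ (dualMixedQuermassintegral μ p ρK ρL / dualQuermassintegral μ p ρK) := by
  have hVK := dualQuermassintegral_pos (μ := μ) (p := p) hK hKpos
  have hVL := dualQuermassintegral_pos (μ := μ) (p := p) hL hLpos
  have hV₁ := dualMixedQuermassintegral_pos (μ := μ) (p := p) hK hL hKpos hLpos
  refine hφ (div_pos hV₁ hVK) (rpow_pos_of_pos (div_pos hVL hVK) _) ?_
  rw [le_rpow_inv_iff_of_pos (div_pos hV₁ hVK).le (div_pos hVL hVK).le (by positivity),
    rpow_natCast]
  exact dualMixedQuermassintegral_div_pow_le hp hK hL hKpos hLpos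

theorem dualQuermassintegral_mul_map_rpow_le (hp : p ≠ 0) (hφ : ConvexOn ℝ (Ioi 0) φ)
    (hφa : AntitoneOn φ (Ioi 0)) (hK : Continuous ρK) (hL : Continuous ρL)
    (hKpos : ∀ x, 0 < ρK x) (hLpos : ∀ x, 0 < ρL x) :
    dualQuermassintegral μ p ρK *
        φ ((dualQuermassintegral μ p ρL / dualQuermassintegral μ p ρK) ^ (p⁻¹ : ℝ)) ≤
      orliczDualMixedQuermassintegral μ p φ ρK ρL :=
  (mul_le_mul_of_nonneg_left
    (map_rpow_le_map_dualMixedQuermassintegral_div hp hφa hK hL hKpos hLpos)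
    (dualQuermassintegral_pos hK hKpos).le).trans
    (dualQuermassintegral_mul_map_le_orliczDualMixedQuermassintegral hp hφ hK hL hKpos hLpos)

theorem dualQuermassintegral_mul_map_rpow_eq_iff [μ.IsOpenPosMeasure] (hp : p ≠ 0)
    (hφ : StrictConvexOn ℝ (Ioi 0) φ) (hφa : AntitoneOn φ (Ioi 0)) (hK : Continuous ρK)
    (hL : Continuous ρL) (hKpos : ∀ x, 0 < ρK x) (hLpos : ∀ x, 0 < ρL x) :
    dualQuermassintegral μ p ρK *
        φ ((dualQuermassintegral μ p ρL / dualQuermassintegral μ p ρK) ^ (p⁻¹ : ℝ)) =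
      orliczDualMixedQuermassintegral μ p φ ρK ρL ↔ ∃ c, 0 < c ∧ ∀ x, ρK x = c * ρL x := by
  have hVK := dualQuermassintegral_pos (μ := μ) (p := p) hK hKpos
  have hVL := dualQuermassintegral_pos (μ := μ) (p := p) hL hLpos
  constructor
  · intro heq
    have hJensen := dualQuermassintegral_mul_map_le_orliczDualMixedQuermassintegral (μ := μ) hp
      hφ.convexOn hK hL hKpos hLpos
    have hmono := mul_le_mul_of_nonneg_left
      (map_rpow_le_map_dualMixedQuermassintegral_div (μ := μ) hp hφa hK hL hKpos hLpos) hVK.le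
    have hA := div_pos (dualMixedQuermassintegral_pos (μ := μ) (p := p) hK hL hKpos hLpos) hVK
    refine ⟨_, inv_pos.2 hA, fun x => ?_⟩
    rw [eq_mul_of_dualQuermassintegral_mul_map_eq hp hφ hK hL hKpos hLpos
      (le_antisymm hJensen (heq ▸ hmono)) x, inv_mul_cancel_left₀ hA.ne']
  · rintro ⟨c, hc, hKL⟩
    have hratio : ∀ x, ρL x / ρK x = c⁻¹ := fun x => by
      rw [hKL, div_mul_cancel_right₀ (hLpos x).ne']
    have hVK_eq : dualQuermassintegral μ p ρK = c ^ p * dualQuermassintegral μ p ρL := by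
      simp only [dualQuermassintegral, hKL, mul_pow, integral_const_mul]
    have hQ : (dualQuermassintegral μ p ρL / dualQuermassintegral μ p ρK) ^ (p⁻¹ : ℝ) = c⁻¹ := by
      rw [hVK_eq, div_mul_cancel_right₀ hVL.ne', ← inv_pow, pow_rpow_inv_natCast (by positivity) hp]
    simp only [orliczDualMixedQuermassintegral, hratio, integral_const_mul, hQ]
    exact mul_comm _ _

end DualQuermassintegral

theorem orlicz_dual_mixed_quermassintegral_minkowski_general
    (n i : ℕ) (hi : i < n)
    (φ : ℝ → ℝ)
    (hφconv : ConvexOn ℝ (Ioi 0) φ)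
    (hφanti : StrictAntiOn φ (Ioi 0))
    (ρK ρL : sphere (0 : EuclideanSpace ℝ (Fin n)) 1 → ℝ)
    (hKc : Continuous ρK) (hLc : Continuous ρL)
    (hKpos : ∀ u, 0 < ρK u) (hLpos : ∀ u, 0 < ρL u)
    (Wφ WK WL : ℝ)
    (hWφ : Wφ = (1 / n) * ∫ u, φ (ρL u / ρK u) * (ρK u) ^ (n - i) ∂(sphereσ n))
    (hWK : WK = (1 / n) * ∫ u, (ρK u) ^ (n - i) ∂(sphereσ n))
    (hWL : WL = (1 / n) * ∫ u, (ρL u) ^ (n - i) ∂(sphereσ n)) :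
    Wφ ≥ WK * φ ((WL / WK) ^ (((n : ℝ) - i)⁻¹)) ∧
      (StrictConvexOn ℝ (Ioi 0) φ →
        (Wφ = WK * φ ((WL / WK) ^ (((n : ℝ) - i)⁻¹)) ↔
          ∃ c : ℝ, 0 < c ∧ ∀ u, ρK u = c * ρL u)) := by
  obtain ⟨m, rfl⟩ : ∃ m, n = m + 1 := ⟨n - 1, by omega⟩
  have hp : m + 1 - i ≠ 0 := by omega
  have hn : (1 / (m + 1 : ℕ) : ℝ) ≠ 0 := by positivity
  change Wφ = _ * orliczDualMixedQuermassintegral _ (m + 1 - i) φ ρK ρL at hWφ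
  change WK = _ * dualQuermassintegral _ (m + 1 - i) ρK at hWK
  change WL = _ * dualQuermassintegral _ (m + 1 - i) ρL at hWL
  rw [← Nat.cast_sub hi.le, hWφ, hWK, hWL, mul_div_mul_left _ _ hn, mul_assoc, ge_iff_le]
  refine ⟨mul_le_mul_of_nonneg_left ?_ (by positivity), fun hstrict => ?_⟩
  · exact dualQuermassintegral_mul_map_rpow_le hp hφconv hφanti.antitoneOn hKc hLc hKpos hLpos
  · rw [mul_right_inj' hn, eq_comm]
    exact dualQuermassintegral_mul_map_rpow_eq_iff hp hstrict hφanti.antitoneOn hKc hLc hKpos hLpos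

/-- The Orlicz dual Minkowski inequality for dual quermassintegrals:
`W̃_{φ,i}(K,L) ≥ W̃ᵢ(K)·φ((W̃ᵢ(L)/W̃ᵢ(K))^{1/(n-i)})`; if `φ` is strictly convex,
equality holds iff `K` and `L` are dilates. -/
theorem orlicz_dual_mixed_quermassintegral_minkowski
    (n i : ℕ) (hi : i < n)
    (φ : ℝ → ℝ)
    (hφconv : ConvexOn ℝ (Ioi 0) φ)
    (hφanti : StrictAntiOn φ (Ioi 0))
    (hφpos : ∀ t ∈ Ioi (0 : ℝ), 0 < φ t)
    (ρK ρL : sphere (0 : EuclideanSpace ℝ (Fin n)) 1 → ℝ)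
    (hKc : Continuous ρK) (hLc : Continuous ρL)
    (hKpos : ∀ u, 0 < ρK u) (hLpos : ∀ u, 0 < ρL u)
    (Wφ WK WL : ℝ)
    (hWφ : Wφ = (1 / n) * ∫ u, φ (ρL u / ρK u) * (ρK u) ^ (n - i) ∂(sphereσ n))
    (hWK : WK = (1 / n) * ∫ u, (ρK u) ^ (n - i) ∂(sphereσ n))
    (hWL : WL = (1 / n) * ∫ u, (ρL u) ^ (n - i) ∂(sphereσ n)) :
    Wφ ≥ WK * φ ((WL / WK) ^ (((n : ℝ) - i)⁻¹)) ∧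
      (StrictConvexOn ℝ (Ioi 0) φ →
        (Wφ = WK * φ ((WL / WK) ^ (((n : ℝ) - i)⁻¹)) ↔
          ∃ c : ℝ, 0 < c ∧ ∀ u, ρK u = c * ρL u)) :=
  orlicz_dual_mixed_quermassintegral_minkowski_general n i hi φ hφconv hφanti ρK ρL hKc hLc hKpos
    hLpos Wφ WK WL hWφ hWK hWL
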